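/- Let S be a set of points in a finite projective plane of order n such that through each point of S there exist at least s lines meeting S in exactly one point. Then |S| ≤ 1 + (n/(2s))·((s−1) + √(4sn − 3s² + 2s + 1)). -/

import Mathlib

/-!
Choose `s` tangents through each of the `k` points of `S`; this gives a set `T` of `s k` lines,
each meeting `S` only in its point of tangency. Let `t z` be the number of lines of `T` through a
point `z`. Over all points, `∑ t z = (n + 1) |T|` and, since two distinct lines meet exactly once,
`∑ t z ^ 2 = |T| ^ 2 + n |T|`; each point of `S` contributes `s` and `s ^ 2` to these sums.
Cauchy–Schwarz over the `n ^ 2 + n + 1 - k` points off `S` then gives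
`s (k - 1) ^ 2 ≤ (s - 1) n (k - 1) + n ^ 2 (n - s + 1)`, and the bound is the larger root of
this quadratic in `k - 1`.
-/

open Configuration Finset

theorem Finset.card_offDiag_add_card {α : Type*} [DecidableEq α] (A : Finset α) :
    #A.offDiag + #A = #A * #A := by
  rw [offDiag_card, Nat.sub_add_cancel (Nat.le_mul_self _)]

theorem Real.le_div_of_mul_sq_le {a b c x : ℝ} (ha : 0 < a) (h : a * x ^ 2 ≤ b * x + c) :
    x ≤ (b + √(b ^ 2 + 4 * a * c)) / (2 * a) := by
  have hsq : (2 * a * x - b) ^ 2 ≤ b ^ 2 + 4 * a * c := by nlinarith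
  rw [le_div_iff₀ (by positivity)]
  linarith [le_abs_self (2 * a * x - b), Real.abs_le_sqrt hsq]

theorem le_semiarc_bound {k o s n : ℝ} (hs : 1 ≤ s) (hn : 0 ≤ n) (hk : 0 ≤ k)
    (ho : o + k = n ^ 2 + n + 1) (h : (s * k * n) ^ 2 ≤ o * (s ^ 2 * k * (k - 1) + s * k * n)) :
    k ≤ 1 + n / (2 * s) * (s - 1 + √(4 * s * n - 3 * s ^ 2 + 2 * s + 1)) := by
  set D := 4 * s * n - 3 * s ^ 2 + 2 * s + 1
  rcases hk.eq_or_lt with rfl | hk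
  · have : 0 ≤ n / (2 * s) * (s - 1 + √D) :=
      mul_nonneg (by positivity) (by linarith [Real.sqrt_nonneg D])
    linarith
  have h_div : s * k * n ^ 2 ≤ o * (s * (k - 1) + n) := by
    refine le_of_mul_le_mul_left ?_ (by positivity : 0 < s * k)
    linear_combination h
  obtain rfl : o = n ^ 2 + n + 1 - k := by linarith
  have hquad : s * (k - 1) ^ 2 ≤ (s - 1) * n * (k - 1) + n ^ 2 * (n - s + 1) := by
    linear_combination h_div
  have hroot := Real.le_div_of_mul_sq_le (by linarith) hquad
  rw [show ((s - 1) * n) ^ 2 + 4 * s * (n ^ 2 * (n - s + 1)) = n ^ 2 * D by ring,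
    Real.sqrt_mul (sq_nonneg n), Real.sqrt_sq hn] at hroot
  linarith [show n / (2 * s) * (s - 1 + √D) = ((s - 1) * n + n * √D) / (2 * s) by ring]

namespace Configuration

section Tangents

variable {P L : Type*} [Membership P L] [∀ (p : P) (ℓ : L), Decidable (p ∈ ℓ)]

theorem sum_card_filter_mem_eq_card_of_tangent (S : Finset P) (T : Finset L)
    (hT : ∀ ℓ ∈ T, #{q ∈ S | q ∈ ℓ} = 1) :
    ∑ p ∈ S, #{ℓ ∈ T | p ∈ ℓ} = #T := by
  have := sum_card_bipartiteAbove_eq_sum_card_bipartiteBelow (s := S) (t := T) (r := (· ∈ ·))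
  rw [card_eq_sum_ones T]
  exact this.trans (sum_congr rfl hT)

theorem exists_tangents [Fintype L] (S : Finset P) (s : ℕ)
    (hS : ∀ p ∈ S, s ≤ #{ℓ : L | p ∈ ℓ ∧ #{q ∈ S | q ∈ ℓ} = 1}) :
    ∃ T : Finset L, (∀ ℓ ∈ T, #{q ∈ S | q ∈ ℓ} = 1) ∧ ∀ p ∈ S, #{ℓ ∈ T | p ∈ ℓ} = s := by
  classical
  choose! F hF_sub hF_card using fun p hp => exists_subset_card_eq (hS p hp)
  have hF_tangent {p ℓ} (hp : p ∈ S) (hℓ : ℓ ∈ F p) : p ∈ ℓ ∧ #{q ∈ S | q ∈ ℓ} = 1 := by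
    simpa using hF_sub p hp hℓ
  have hF_unique {p p' ℓ} (hp : p ∈ S) (hp' : p' ∈ S) (hℓ : ℓ ∈ F p) (hp'ℓ : p' ∈ ℓ) : p' = p := by
    obtain ⟨hpℓ, hcard⟩ := hF_tangent hp hℓ
    exact card_le_one.mp hcard.le _ (by simp [hp', hp'ℓ]) _ (by simp [hp, hpℓ])
  refine ⟨S.biUnion F, fun ℓ hℓ => ?_, fun p hp => ?_⟩
  · obtain ⟨p, hp, hℓ⟩ := mem_biUnion.mp hℓ
    exact (hF_tangent hp hℓ).2
  · rw [← hF_card p hp]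
    congr 1
    ext ℓ
    simp only [mem_filter, mem_biUnion]
    constructor
    · rintro ⟨⟨p', hp', hℓ⟩, hpℓ⟩
      rwa [hF_unique hp' hp hℓ hpℓ]
    · exact fun hℓ => ⟨⟨p, hp, hℓ⟩, (hF_tangent hp hℓ).1⟩

end Tangents

namespace ProjectivePlane

variable {P L : Type*} [Membership P L] [Fintype P] [ProjectivePlane P L]
  [∀ (p : P) (ℓ : L), Decidable (p ∈ ℓ)]

theorem sum_card_filter_mem [Finite L] (T : Finset L) :
    ∑ z : P, #{ℓ ∈ T | z ∈ ℓ} = (order P L + 1) * #T := by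
  have := sum_card_bipartiteAbove_eq_sum_card_bipartiteBelow
    (s := (univ : Finset P)) (t := T) (r := (· ∈ ·))
  rw [mul_comm, ← smul_eq_mul, ← sum_const]
  refine this.trans (sum_congr rfl fun ℓ _ => ?_)
  rw [← pointCount_eq P ℓ, pointCount, Nat.card_eq_fintype_card, Fintype.card_subtype]
  rfl

theorem sum_card_offDiag_filter_mem [DecidableEq L] (T : Finset L) :
    ∑ z : P, #{ℓ ∈ T | z ∈ ℓ}.offDiag = #T.offDiag := by
  have hoffDiag (z : P) : {ℓ ∈ T | z ∈ ℓ}.offDiag = {q ∈ T.offDiag | z ∈ q.1 ∧ z ∈ q.2} := by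
    ext q
    simp only [mem_offDiag, mem_filter]
    tauto
  simp_rw [hoffDiag]
  have := sum_card_bipartiteAbove_eq_sum_card_bipartiteBelow
    (s := (univ : Finset P)) (t := T.offDiag) (r := fun z q => z ∈ q.1 ∧ z ∈ q.2)
  rw [card_eq_sum_ones T.offDiag]
  refine this.trans (sum_congr rfl fun q hq => ?_)
  obtain ⟨z, hz, hz_unique⟩ :=
    HasPoints.existsUnique_point (P := P) (L := L) q.1 q.2 (mem_offDiag.mp hq).2.2
  exact card_eq_one.mpr ⟨z, by ext; simpa using ⟨hz_unique _, fun h => h ▸ hz⟩⟩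

theorem sum_sq_card_filter_mem [Finite L] (T : Finset L) :
    ∑ z : P, #{ℓ ∈ T | z ∈ ℓ} ^ 2 = #T ^ 2 + order P L * #T := by
  classical
  have h := congrArg₂ (· + ·) (sum_card_offDiag_filter_mem (P := P) T)
    (sum_card_filter_mem (P := P) T)
  simp only [← sum_add_distrib, card_offDiag_add_card] at h
  simp_rw [sq, h]
  linarith [card_offDiag_add_card T]

theorem sq_mul_le_card_compl_mul [Finite L] [DecidableEq P] (S : Finset P) (T : Finset L) (s : ℕ)
    (hT : ∀ ℓ ∈ T, #{q ∈ S | q ∈ ℓ} = 1) (hTs : ∀ p ∈ S, #{ℓ ∈ T | p ∈ ℓ} = s) :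
    ((s : ℝ) * #S * order P L) ^ 2 ≤
      #Sᶜ * ((s : ℝ) ^ 2 * #S * (#S - 1) + s * #S * order P L) := by
  set t : P → ℕ := fun z => #{ℓ ∈ T | z ∈ ℓ}
  have hT_card : #T = s * #S := by
    rw [← sum_card_filter_mem_eq_card_of_tangent S T hT, sum_congr rfl hTs, sum_const, smul_eq_mul,
      mul_comm]
  have h_sum_S : ∑ z ∈ S, t z = s * #S := by rw [sum_congr rfl hTs, sum_const, smul_eq_mul, mul_comm]
  have h_sum_sq_S : ∑ z ∈ S, t z ^ 2 = s ^ 2 * #S := by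
    rw [sum_congr rfl fun p hp => congrArg (· ^ 2) (hTs p hp), sum_const, smul_eq_mul, mul_comm]
  have h_sum : ∑ z ∈ Sᶜ, t z = s * #S * order P L := by
    have := sum_compl_add_sum S t
    rw [sum_card_filter_mem, h_sum_S, hT_card] at this
    linarith
  have h_sum_sq : ∑ z ∈ Sᶜ, (t z : ℝ) ^ 2 = (s : ℝ) ^ 2 * #S * (#S - 1) + s * #S * order P L := by
    have := sum_compl_add_sum S (t · ^ 2)
    rw [sum_sq_card_filter_mem, h_sum_sq_S, hT_card] at this
    have := congrArg (Nat.cast : ℕ → ℝ) this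
    push_cast at this
    linear_combination this
  calc ((s : ℝ) * #S * order P L) ^ 2 = (∑ z ∈ Sᶜ, (t z : ℝ)) ^ 2 := by
        rw [← Nat.cast_sum, h_sum]; push_cast; rfl
    _ ≤ _ := sq_sum_le_card_mul_sum_sq
    _ = _ := by rw [h_sum_sq]

end ProjectivePlane

end Configuration

theorem semiarc_bound (P L : Type*) [Membership P L]
    [Fintype P] [Fintype L] [ProjectivePlane P L]
    (n s : ℕ) (hn : ProjectivePlane.order P L = n) (hs : 1 ≤ s)
    (S : Finset P)
    (hS : ∀ p ∈ S, s ≤ Nat.card {ℓ : L // p ∈ ℓ ∧ Nat.card {q : P // q ∈ S ∧ q ∈ ℓ} = 1}) :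
    (S.card : ℝ) ≤ 1 + ((n : ℝ) / (2 * s)) *
        (((s : ℝ) - 1) + Real.sqrt (4 * s * n - 3 * (s : ℝ) ^ 2 + 2 * s + 1)) := by
  classical
  subst hn
  have hS' : ∀ p ∈ S, s ≤ #{ℓ : L | p ∈ ℓ ∧ #{q ∈ S | q ∈ ℓ} = 1} := by
    simpa [Nat.card_eq_fintype_card, Fintype.card_subtype, filter_and, inter_filter] using hS
  obtain ⟨T, hT, hTs⟩ := exists_tangents S s hS'
  refine le_semiarc_bound (by exact_mod_cast hs) (Nat.cast_nonneg _) (Nat.cast_nonneg _) ?_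
    (ProjectivePlane.sq_mul_le_card_compl_mul S T s hT hTs)
  exact_mod_cast (card_compl_add_card S).trans (ProjectivePlane.card_points P L)
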